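/- arXiv:2303.09895 — 6 statements merged into one kernel-verified Lean document; each statement's English description precedes it below -/
import Mathlib

section
/- Let d_1,...,d_r be positive integers such that there exist integers q_1,...,q_r with gcd(q_i, d_i) = 1 for all i and the sum of q_i/d_i over i is an integer. Then lcm(d_1,...,d_r) equals the quotient of gcd over all i of (d_1⋯d_r)/d_i by the gcd over all pairs i ≠ j of (d_1⋯d_r)/(d_i d_j). (Assume r ≥ 2.) -/
/-!
Multiplying `∑ qⱼ / dⱼ ∈ ℤ` by `lcm_{j ≠ i} dⱼ` and using `gcd (qᵢ, dᵢ) = 1` shows that every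
`dᵢ` divides the lcm `Lᵢ` of the others, so `Lᵢ = L := lcm (d₁, …, d_r)` for all `i`. Hence
`lcm_{i ≠ j} dᵢ dⱼ = lcm_i dᵢ Lᵢ = L²`. Writing `P = ∏ dⱼ`, the general identity
`gcd_i (P / fᵢ) = P / lcm_i fᵢ` turns the two gcds of the statement into `P / L` and `P / L²`.
-/

open Finset

variable {ι : Type*}

theorem Finset.lcm_mul_left_of_nonempty {s : Finset ι} (hs : s.Nonempty) (a : ℕ) (f : ι → ℕ) :
    s.lcm (fun i => a * f i) = a * s.lcm f := by
  classical
  induction hs using Finset.Nonempty.cons_induction with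
  | singleton i => simp [lcm_singleton]
  | cons i s hi _ ih =>
    rw [cons_eq_insert, lcm_insert, lcm_insert, ih]
    exact Nat.lcm_mul_left a (f i) (s.lcm f)

theorem Finset.gcd_div_eq_div_lcm {s : Finset ι} (hs : s.Nonempty) {f : ι → ℕ} {n : ℕ}
    (hf : ∀ i ∈ s, f i ∣ n) : s.gcd (fun i => n / f i) = n / s.lcm f := by
  apply Nat.dvd_antisymm
  · obtain ⟨i, hi⟩ := hs
    set g := s.gcd (fun i => n / f i)
    have hgn : g ∣ n := (gcd_dvd hi).trans (Nat.div_dvd_of_dvd (hf i hi))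
    have hfg : ∀ j ∈ s, f j ∣ n / g := fun j hj =>
      Nat.dvd_div_of_mul_dvd (mul_comm (f j) g ▸ Nat.mul_dvd_of_dvd_div (hf j hj) (gcd_dvd hj))
    exact Nat.dvd_div_of_mul_dvd (mul_comm g _ ▸ Nat.mul_dvd_of_dvd_div hgn (Finset.lcm_dvd hfg))
  · exact Finset.dvd_gcd fun i hi => Nat.div_dvd_div_left (Finset.lcm_dvd hf) (dvd_lcm hi)

theorem Finset.lcm_offDiag_mul_eq_sq [DecidableEq ι] {s : Finset ι} (hs : s.Nontrivial)
    {f : ι → ℕ} (hf : ∀ i ∈ s, f i ∣ (s.erase i).lcm f) :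
    s.offDiag.lcm (fun p => f p.1 * f p.2) = s.lcm f ^ 2 := by
  apply Nat.dvd_antisymm
  · refine Finset.lcm_dvd fun p hp => sq (s.lcm f) ▸ mul_dvd_mul ?_ ?_
    · exact dvd_lcm (mem_offDiag.1 hp).1
    · exact dvd_lcm (mem_offDiag.1 hp).2.1
  · rw [sq, ← lcm_mul_left_of_nonempty hs.nonempty]
    refine Finset.lcm_dvd fun i hi => ?_
    have hL : s.lcm f ∣ (s.erase i).lcm f := Finset.lcm_dvd fun j hj => by
      obtain rfl | hji := eq_or_ne j i
      · exact hf j hj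
      · exact dvd_lcm (mem_erase.2 ⟨hji, hj⟩)
    calc s.lcm f * f i ∣ (s.erase i).lcm f * f i := mul_dvd_mul_right hL _
      _ = f i * (s.erase i).lcm f := mul_comm _ _
      _ = (s.erase i).lcm (fun j => f i * f j) :=
        (lcm_mul_left_of_nonempty hs.erase_nonempty _ _).symm
      _ ∣ s.offDiag.lcm (fun p => f p.1 * f p.2) := Finset.lcm_dvd fun j hj =>
        dvd_lcm (f := fun p => f p.1 * f p.2) (b := (i, j))
          (mem_offDiag.2 ⟨hi, mem_of_mem_erase hj, (ne_of_mem_erase hj).symm⟩)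

theorem dvd_lcm_erase_of_sum_div_eq_intCast [DecidableEq ι] {s : Finset ι} {d : ι → ℕ}
    (hd : ∀ i ∈ s, d i ≠ 0) {q : ι → ℤ} (hcop : ∀ i ∈ s, Int.gcd (q i) (d i) = 1) {z : ℤ}
    (hsum : ∑ i ∈ s, (q i : ℚ) / d i = z) {i : ι} (hi : i ∈ s) :
    d i ∣ (s.erase i).lcm d := by
  set L := (s.erase i).lcm d
  have hrest :
      ∑ j ∈ s.erase i, q j * ((L / d j : ℕ) : ℚ) = L * ∑ j ∈ s.erase i, (q j : ℚ) / d j := by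
    rw [mul_sum]
    refine sum_congr rfl fun j hj => ?_
    rw [Nat.cast_div (dvd_lcm hj) (by exact_mod_cast hd j (mem_of_mem_erase hj))]
    ring
  have hdi : (d i : ℚ) ≠ 0 := by exact_mod_cast hd i hi
  have hmulQ : (q i * L : ℚ) = d i * (z * L - ∑ j ∈ s.erase i, q j * ((L / d j : ℕ) : ℚ)) := by
    rw [hrest, ← hsum, ← add_sum_erase s _ hi]
    field_simp
    ring
  have hmul : q i * (L : ℤ) = d i * (z * L - ∑ j ∈ s.erase i, q j * ((L / d j : ℕ) : ℤ)) :=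
    Int.cast_injective (α := ℚ) (by push_cast; exact hmulQ)
  have hcop' : IsCoprime (d i : ℤ) (q i) := by
    rw [Int.isCoprime_iff_gcd_eq_one, Int.gcd_comm]
    exact hcop i hi
  exact_mod_cast hcop'.dvd_of_dvd_mul_left ⟨_, hmul⟩

theorem lcm_eq_gcd_div_gcd_pairs_general (r : ℕ) (hr : 2 ≤ r)
    (d : Fin r → ℕ) (hd : ∀ i, 0 < d i)
    (q : Fin r → ℤ)
    (hcop : ∀ i, Int.gcd (q i) (d i) = 1)
    (hsum : ∃ z : ℤ, ∑ i, (q i : ℚ) / (d i : ℚ) = (z : ℚ)) :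
    Finset.univ.lcm d
      = (Finset.univ.gcd fun i => (∏ j, d j) / d i)
        / ((Finset.univ : Finset (Fin r)).offDiag.gcd
            fun p => (∏ j, d j) / (d p.1 * d p.2)) := by
  obtain ⟨z, hz⟩ := hsum
  have hs : (univ : Finset (Fin r)).Nontrivial :=
    univ_nontrivial_iff.2 (Fin.nontrivial_iff_two_le.2 hr)
  obtain ⟨a, ha, b, hb, hab⟩ := id hs
  have hoff : (univ : Finset (Fin r)).offDiag.Nonempty := ⟨(a, b), mem_offDiag.2 ⟨ha, hb, hab⟩⟩
  have hpair : ∀ p ∈ (univ : Finset (Fin r)).offDiag, d p.1 * d p.2 ∣ ∏ j, d j := fun p hp => by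
    rw [← prod_pair (mem_offDiag.1 hp).2.2]
    exact prod_dvd_prod_of_subset _ _ d (subset_univ _)
  have hsq : (univ : Finset (Fin r)).offDiag.lcm (fun p => d p.1 * d p.2) = univ.lcm d ^ 2 :=
    lcm_offDiag_mul_eq_sq hs fun i hi =>
      dvd_lcm_erase_of_sum_div_eq_intCast (fun j _ => (hd j).ne') (fun j _ => hcop j) hz hi
  obtain ⟨k, hk⟩ : univ.lcm d ^ 2 ∣ ∏ j, d j := hsq ▸ Finset.lcm_dvd hpair
  have hL : univ.lcm d ≠ 0 := lcm_ne_zero_iff.2 fun i _ => (hd i).ne'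
  have hk0 : k ≠ 0 := by
    rintro rfl
    exact (prod_pos fun i _ => hd i).ne' (by simpa using hk)
  have hPL : (∏ j, d j) / univ.lcm d = univ.lcm d * k := by
    rw [hk, sq, mul_assoc, Nat.mul_div_cancel_left _ hL.bot_lt]
  have hPL2 : (∏ j, d j) / univ.lcm d ^ 2 = k := by
    rw [hk, Nat.mul_div_cancel_left _ (by positivity)]
  rw [gcd_div_eq_div_lcm hs.nonempty fun i _ => dvd_prod_of_mem d (mem_univ i),
    gcd_div_eq_div_lcm hoff hpair, hsq, hPL, hPL2, Nat.mul_div_cancel _ hk0.bot_lt]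

/-- Let `d 1, ..., d r` (`r ≥ 2`) be positive integers such that there exist nonzero
integers `q i` with `gcd (q i) (d i) = 1` and `∑ i, q i / d i ∈ ℤ`.  Then
`lcm (d 1, ..., d r)` equals the gcd over `i` of `(d 1 ⋯ d r) / d i` divided by the
gcd over pairs `i ≠ j` of `(d 1 ⋯ d r) / (d i * d j)`. -/
theorem lcm_eq_gcd_div_gcd_pairs (r : ℕ) (hr : 2 ≤ r)
    (d : Fin r → ℕ) (hd : ∀ i, 0 < d i)
    (q : Fin r → ℤ) (hq0 : ∀ i, q i ≠ 0)
    (hcop : ∀ i, Int.gcd (q i) (d i) = 1)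
    (hsum : ∃ z : ℤ, ∑ i, (q i : ℚ) / (d i : ℚ) = (z : ℚ)) :
    Finset.univ.lcm d
      = (Finset.univ.gcd fun i => (∏ j, d j) / d i)
        / ((Finset.univ : Finset (Fin r)).offDiag.gcd
            fun p => (∏ j, d j) / (d p.1 * d p.2)) :=
  lcm_eq_gcd_div_gcd_pairs_general r hr d hd q hcop hsum
end

section
/- Let d_1,...,d_r be positive integers admitting integers q_1,...,q_r with gcd(q_i,d_i)=1 and Σ_{i=1}^r q_i/d_i ∈ ℤ. Then for each index j, d_j divides lcm of the remaining d_i (i ≠ j). In particular, setting κ = lcm(d_1,...,d_r), κ² divides d_1⋯d_r. -/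
/-!
Clearing the other denominators shows that `q j / d j` differs from an integer by a rational
whose denominator divides `lcm_{i ≠ j} d i`; as `q j / d j` is in lowest terms, `d j` divides
that lcm. Consequently `κ = lcm d` divides `∏_{i ≠ j} d i`, i.e. `κ * d j ∣ ∏ d` for every `j`.
Writing `∏ d = κ * m` and cancelling `κ` gives `d j ∣ m` for all `j`, so `κ ∣ m` and `κ² ∣ ∏ d`.
-/

open Finset

namespace Rat

theorem den_intCast_div_natCast_of_gcd_eq_one {a : ℤ} {b : ℕ} (hb : 0 < b) (h : a.gcd b = 1) :
    ((a : ℚ) / b).den = b := by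
  exact_mod_cast den_div_eq_of_coprime (a := a) (b := b) (by exact_mod_cast hb) h

theorem den_dvd_lcm_den_erase_of_sum_eq_intCast {ι : Type*} [DecidableEq ι] {s : Finset ι}
    (x : ι → ℚ) {z : ℤ} (hsum : ∑ i ∈ s, x i = z) {j : ι} (hj : j ∈ s) :
    (x j).den ∣ (s.erase j).lcm fun i ↦ (x i).den := by
  have hxj : x j = z - ∑ i ∈ s.erase j, x i := by
    rw [← hsum, ← add_sum_erase s x hj, add_sub_cancel_right]
  rw [hxj, intCast_sub_den]
  exact Finset.Rat.den_sum_dvd_lcm_den _ _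

end Rat

namespace Finset

variable {ι α : Type*} [DecidableEq ι] [CommMonoidWithZero α] [NormalizedGCDMonoid α]
  {s : Finset ι} {d : ι → α}

theorem lcm_dvd_prod_erase {j : ι} (hj : j ∈ s) (h : d j ∣ (s.erase j).lcm d) :
    s.lcm d ∣ ∏ i ∈ s.erase j, d i := by
  conv_lhs => rw [← insert_erase hj]
  rw [lcm_insert]
  exact _root_.lcm_dvd (h.trans (lcm_dvd_prod _ _)) (lcm_dvd_prod _ _)

theorem lcm_sq_dvd_prod_of_dvd_lcm_erase (h : ∀ j ∈ s, d j ∣ (s.erase j).lcm d) :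
    s.lcm d ^ 2 ∣ ∏ i ∈ s, d i := by
  have hmul : ∀ j ∈ s, s.lcm d * d j ∣ ∏ i ∈ s, d i := fun j hj ↦ by
    rw [← prod_erase_mul s d hj]
    exact mul_dvd_mul_right (lcm_dvd_prod_erase hj (h j hj)) _
  obtain ⟨m, hm⟩ := lcm_dvd_prod s d
  rcases eq_or_ne (s.lcm d) 0 with h0 | h0
  · simp [hm, h0]
  have hm_dvd : s.lcm d ∣ m := lcm_dvd fun j hj ↦ by
    rw [← mul_dvd_mul_iff_left h0, ← hm]
    exact hmul j hj
  rw [hm, sq]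
  exact mul_dvd_mul_left _ hm_dvd

end Finset

theorem dvd_lcm_erase_and_lcm_sq_dvd_prod_general (r : ℕ)
    (d : Fin r → ℕ) (hd : ∀ i, 0 < d i)
    (q : Fin r → ℤ) (hcop : ∀ i, Int.gcd (q i) (d i) = 1)
    (hsum : ∃ z : ℤ, ∑ i, (q i : ℚ) / (d i : ℚ) = (z : ℚ)) :
    (∀ j, d j ∣ (Finset.univ.erase j).lcm d)
      ∧ (Finset.univ.lcm d) ^ 2 ∣ ∏ i, d i := by
  obtain ⟨z, hz⟩ := hsum
  have hden : ∀ i, ((q i : ℚ) / d i).den = d i := fun i ↦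
    Rat.den_intCast_div_natCast_of_gcd_eq_one (hd i) (hcop i)
  have hdvd : ∀ j, d j ∣ (univ.erase j).lcm d := fun j ↦ by
    simpa only [hden] using Rat.den_dvd_lcm_den_erase_of_sum_eq_intCast _ hz (mem_univ j)
  exact ⟨hdvd, lcm_sq_dvd_prod_of_dvd_lcm_erase fun j _ ↦ hdvd j⟩

/-- Let `d 1, ..., d r` (`r ≥ 2`) be positive integers admitting integers `q i` with
`gcd (q i) (d i) = 1` and `∑ i, q i / d i ∈ ℤ`.  Then each `d j` divides the lcm of
the remaining `d i`, and, with `κ = lcm (d 1, ..., d r)`, `κ²` divides `d 1 ⋯ d r`. -/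
theorem dvd_lcm_erase_and_lcm_sq_dvd_prod (r : ℕ) (hr : 2 ≤ r)
    (d : Fin r → ℕ) (hd : ∀ i, 0 < d i)
    (q : Fin r → ℤ) (hcop : ∀ i, Int.gcd (q i) (d i) = 1)
    (hsum : ∃ z : ℤ, ∑ i, (q i : ℚ) / (d i : ℚ) = (z : ℚ)) :
    (∀ j, d j ∣ (Finset.univ.erase j).lcm d)
      ∧ (Finset.univ.lcm d) ^ 2 ∣ ∏ i, d i :=
  dvd_lcm_erase_and_lcm_sq_dvd_prod_general r d hd q hcop hsum
end

section
/- Let r > 2 and let d_1,...,d_r be integers each at least 2 such that there exist q_i with gcd(q_i,d_i)=1, 1 ≤ q_i ≤ d_i - 1, and Σ q_i/d_i ∈ ℤ. Then the orbifold Euler characteristic χ := 2 - Σ_{i=1}^r (1 - 1/d_i) satisfies χ ≤ 0. -/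
/-!
Put `z := ∑ qᵢ/dᵢ ∈ ℤ` and `S := ∑ (1 - 1/dᵢ)`. Since `1 ≤ qᵢ ≤ dᵢ - 1`, both `qᵢ/dᵢ` and
`1 - qᵢ/dᵢ` are at most `1 - 1/dᵢ`, so `S` bounds both `z` and `r - z`. These are integers
adding up to `r ≥ 3`, so one of them is at least `2`; hence `S ≥ 2`, i.e. `χ = 2 - S ≤ 0`.
-/

open Finset

section OrderedField

variable {K : Type*} [Field K] [LinearOrder K] [IsStrictOrderedRing K]

theorem div_le_one_sub_one_div {q d : K} (hd : 0 < d) (hq : q ≤ d - 1) :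
    q / d ≤ 1 - 1 / d := by
  rw [one_sub_div hd.ne', div_le_div_iff_of_pos_right hd]
  exact hq

theorem one_sub_div_le_one_sub_one_div {q d : K} (hd : 0 < d) (hq : 1 ≤ q) :
    1 - q / d ≤ 1 - 1 / d :=
  sub_le_sub_left (div_le_div_of_nonneg_right hq hd.le) 1

theorem two_le_of_int_le_of_sub_int_le {r : ℕ} (hr : 2 < r) {z : ℤ} {x : K}
    (hz : (z : K) ≤ x) (hrz : (r : K) - z ≤ x) : 2 ≤ x := by
  rcases le_or_gt z 1 with hz1 | hz2
  · have : (2 : K) ≤ (r : K) - z := by exact_mod_cast (by omega : (2 : ℤ) ≤ r - z)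
    linarith
  · have : (2 : K) ≤ z := by exact_mod_cast hz2
    linarith

end OrderedField

theorem orbifold_euler_char_nonpos_general (r : ℕ) (hr : 2 < r)
    (d : Fin r → ℤ)
    (q : Fin r → ℤ)
    (hq1 : ∀ i, 1 ≤ q i) (hq2 : ∀ i, q i ≤ d i - 1)
    (hsum : ∃ z : ℤ, ∑ i, (q i : ℚ) / (d i : ℚ) = (z : ℚ)) :
    2 - ∑ i, (1 - 1/(d i : ℚ)) ≤ 0 := by
  obtain ⟨z, hz⟩ := hsum
  have hd : ∀ i, (0 : ℚ) < d i := fun i => by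
    exact_mod_cast (by linarith [hq1 i, hq2 i] : (0 : ℤ) < d i)
  have hz_le : (z : ℚ) ≤ ∑ i, (1 - 1 / (d i : ℚ)) :=
    hz ▸ sum_le_sum fun i _ => div_le_one_sub_one_div (hd i) (by exact_mod_cast hq2 i)
  have hrz_le : (r : ℚ) - z ≤ ∑ i, (1 - 1 / (d i : ℚ)) := by
    calc (r : ℚ) - z = ∑ i, (1 - (q i : ℚ) / d i) := by simp [sum_sub_distrib, hz]
      _ ≤ _ := sum_le_sum fun i _ =>
        one_sub_div_le_one_sub_one_div (hd i) (by exact_mod_cast hq1 i)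
  linarith [two_le_of_int_le_of_sub_int_le hr hz_le hrz_le]

/-- Let `r > 2` and `d 1, ..., d r ≥ 2` admit integers `q i` with `gcd (q i) (d i) = 1`,
`1 ≤ q i ≤ d i - 1`, and `∑ q i / d i ∈ ℤ`.  Then the orbifold Euler characteristic
`2 - ∑ (1 - 1/(d i))` is nonpositive. -/
theorem orbifold_euler_char_nonpos (r : ℕ) (hr : 2 < r)
    (d : Fin r → ℤ) (hd : ∀ i, 2 ≤ d i)
    (q : Fin r → ℤ) (hcop : ∀ i, Int.gcd (q i) (d i) = 1)
    (hq1 : ∀ i, 1 ≤ q i) (hq2 : ∀ i, q i ≤ d i - 1)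
    (hsum : ∃ z : ℤ, ∑ i, (q i : ℚ) / (d i : ℚ) = (z : ℚ)) :
    2 - ∑ i, (1 - 1/(d i : ℚ)) ≤ 0 :=
  orbifold_euler_char_nonpos_general r hr d q hq1 hq2 hsum
end

section
/- Let d_1,...,d_r be positive integers with coprime q_i (gcd(q_i,d_i)=1) such that Σ q_i/d_i ∈ ℤ, and set κ = lcm(d_i). In the abelian group generated by A_1,...,A_r, F with relations d_iA_i = F, the element T := Σ_{i=1}^r q_iA_i - α·F (where α = Σ q_i/d_i) has order exactly κ. -/
/-- The abelian group with generators `A 1, ..., A r, F` and relations `d i • A i = F`,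
modelled as the quotient of `(Fin r → ℤ) × ℤ` (coordinates: the `A i`'s and `F`) by the
span of the relation vectors `d i • A i - F`. -/
abbrev RelMod (r : ℕ) (d : Fin r → ℕ) : Type :=
  ((Fin r → ℤ) × ℤ) ⧸ Submodule.span ℤ
    (Set.range fun i : Fin r => ((Pi.single i (d i : ℤ) : Fin r → ℤ), (-1 : ℤ)))

/-!
A class `(v, f)` vanishes iff it is a sum of relations `∑ c i • (d i • A i - F)`, i.e.
`v i = c i * d i` and `f = -∑ c i`; eliminating `c`, iff `d i ∣ v i` for all `i` and
`f = -∑ v i / d i`. For `n • T` the second condition is `n * α = ∑ n * q i / d i`, which holds by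
the choice of `α`, and the first is `d i ∣ n` because `q i` is prime to `d i`.
-/

lemma natCast_dvd_mul_iff_of_gcd_eq_one {d n : ℕ} {q : ℤ} (h : Int.gcd q d = 1) :
    (d : ℤ) ∣ n * q ↔ d ∣ n := by
  have hc : IsCoprime (d : ℤ) q := (Int.isCoprime_iff_gcd_eq_one.mpr h).symm
  exact ⟨fun hdvd => Int.natCast_dvd_natCast.mp (hc.dvd_of_dvd_mul_right hdvd),
    fun hdvd => (Int.natCast_dvd_natCast.mpr hdvd).mul_right q⟩

namespace RelMod

variable {r : ℕ} {d : Fin r → ℕ}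

lemma sum_smul_relations (c : Fin r → ℤ) :
    ∑ i, c i • ((Pi.single i (d i : ℤ) : Fin r → ℤ), (-1 : ℤ)) =
      (fun j => c j * d j, -∑ i, c i) := by
  refine Prod.ext (funext fun j => ?_) ?_
  · simp [Prod.fst_sum, Finset.sum_apply, Pi.single_apply]
  · simp [Prod.snd_sum]

lemma mk_eq_zero_iff (hd : ∀ i, d i ≠ 0) (v : Fin r → ℤ) (f : ℤ) :
    (Submodule.Quotient.mk (v, f) : RelMod r d) = 0 ↔
      (∀ i, (d i : ℤ) ∣ v i) ∧ (f : ℚ) = -∑ i, (v i : ℚ) / d i := by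
  have hdQ : ∀ i, (d i : ℚ) ≠ 0 := fun i => Nat.cast_ne_zero.mpr (hd i)
  rw [Submodule.Quotient.mk_eq_zero, Submodule.mem_span_range_iff_exists_fun]
  simp only [sum_smul_relations, Prod.mk.injEq]
  constructor
  · rintro ⟨c, rfl, rfl⟩
    refine ⟨fun i => Dvd.intro_left _ rfl, ?_⟩
    push_cast
    simp only [mul_div_cancel_right₀ _ (hdQ _)]
  · rintro ⟨hdvd, hf⟩
    refine ⟨fun i => v i / d i, funext fun i => Int.ediv_mul_cancel (hdvd i), ?_⟩
    have hcast : ∀ i, ((v i / d i : ℤ) : ℚ) = v i / d i := fun i => by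
      rw [Int.cast_div (hdvd i) (by simpa using hdQ i), Int.cast_natCast]
    apply Int.cast_injective (α := ℚ)
    simp only [Int.cast_neg, Int.cast_sum, hcast, hf]

lemma nsmul_mk_eq_zero_iff (hd : ∀ i, d i ≠ 0) {q : Fin r → ℤ}
    (hcop : ∀ i, Int.gcd (q i) (d i) = 1) {α : ℤ}
    (hα : ∑ i, (q i : ℚ) / (d i : ℚ) = (α : ℚ)) (n : ℕ) :
    n • (Submodule.Quotient.mk (q, -α) : RelMod r d) = 0 ↔ Finset.univ.lcm d ∣ n := by
  have hsum : ((-(n * α) : ℤ) : ℚ) = -∑ i, ((n * q i : ℤ) : ℚ) / d i := by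
    push_cast
    simp only [mul_div_assoc, ← Finset.mul_sum, hα]
  rw [← Submodule.Quotient.mk_smul, Prod.smul_mk]
  have hq : (n • q : Fin r → ℤ) = fun i => n * q i := funext fun i => by simp
  rw [hq, show n • -α = -(n * α) by simp, mk_eq_zero_iff hd, and_iff_left hsum,
    Finset.lcm_dvd_iff]
  simp only [Finset.mem_univ, true_implies]
  exact forall_congr' fun i => natCast_dvd_mul_iff_of_gcd_eq_one (hcop i)

end RelMod

/-- Let `d 1, ..., d r` be positive integers with `gcd (q i) (d i) = 1` and
`∑ q i / d i = α ∈ ℤ`, and `κ = lcm(d i)`.  In the abelian group generated by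
`A 1, ..., A r, F` with relations `d i • A i = F`, the element
`T = ∑ q i • A i - α • F` has order exactly `κ`. -/
theorem order_of_T (r : ℕ) (d : Fin r → ℕ) (hd : ∀ i, 0 < d i)
    (q : Fin r → ℤ) (hcop : ∀ i, Int.gcd (q i) (d i) = 1)
    (α : ℤ) (hα : ∑ i, (q i : ℚ) / (d i : ℚ) = (α : ℚ)) :
    addOrderOf ((Submodule.Quotient.mk ((fun i => q i), -α)) : RelMod r d)
      = Finset.univ.lcm d :=
  Nat.dvd_right_iff_eq.mp fun n => addOrderOf_dvd_iff_nsmul_eq_zero.trans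
    (RelMod.nsmul_mk_eq_zero_iff (fun i => (hd i).ne') hcop hα n)
end

section
/- In the abelian group G generated by A_1,...,A_r, F with relations d_i·A_i = F (d_i positive integers), every element D has a unique representation D = Σ_{i=1}^r a_iA_i + f·F with integers f and 0 ≤ a_i < d_i for each i. -/
/-!
Write `D = ∑ a i • A i + f • F` in any way and divide with remainder, `a i = q i * d i + a' i`;
the relations turn `q i * d i • A i` into `q i • F`, which gives the normal form. Conversely, a
relation `∑ c i • (d i • A i - F)` has `A i`-coordinate `c i * d i`, and the difference of two
normal forms has `A i`-coordinates of absolute value `< d i`, so all `c i` vanish.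
-/

open Submodule

section

variable {ι : Type*} [Fintype ι]

theorem sum_smul_single_neg_one [DecidableEq ι] (d c : ι → ℤ) :
    ∑ i, c i • ((Pi.single i (d i) : ι → ℤ), (-1 : ℤ)) = (fun j => c j * d j, -∑ i, c i) := by
  ext j
  · simp [Prod.fst_sum, Finset.sum_apply, Pi.single_apply]
  · simp [Prod.snd_sum]

theorem mem_span_single_neg_one_iff [DecidableEq ι] (d : ι → ℤ) (u : (ι → ℤ) × ℤ) :
    u ∈ span ℤ (Set.range fun i => ((Pi.single i (d i) : ι → ℤ), (-1 : ℤ))) ↔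
      ∃ c : ι → ℤ, u = (fun j => c j * d j, -∑ i, c i) := by
  simp only [mem_span_range_iff_exists_fun, sum_smul_single_neg_one, eq_comm]

def normalForm (d : ι → ℤ) (v : (ι → ℤ) × ℤ) : (ι → ℤ) × ℤ :=
  (fun i => v.1 i % d i, v.2 + ∑ i, v.1 i / d i)

theorem normalForm_fst_nonneg_and_lt {d : ι → ℤ} (hd : ∀ i, 0 < d i) (v : (ι → ℤ) × ℤ) (i : ι) :
    0 ≤ (normalForm d v).1 i ∧ (normalForm d v).1 i < d i :=
  ⟨Int.emod_nonneg _ (hd i).ne', Int.emod_lt_of_pos _ (hd i)⟩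

theorem normalForm_sub_mem_span [DecidableEq ι] (d : ι → ℤ) (v : (ι → ℤ) × ℤ) :
    normalForm d v - v ∈ span ℤ (Set.range fun i => ((Pi.single i (d i) : ι → ℤ), (-1 : ℤ))) := by
  rw [mem_span_single_neg_one_iff]
  refine ⟨fun i => -(v.1 i / d i), ?_⟩
  ext j
  · simp [normalForm, Int.emod_def, mul_comm]
  · simp [normalForm]

theorem eq_of_sub_mem_span_single_neg_one [DecidableEq ι] {d : ι → ℤ} {w n : (ι → ℤ) × ℤ}
    (hw : ∀ i, 0 ≤ w.1 i ∧ w.1 i < d i) (hn : ∀ i, 0 ≤ n.1 i ∧ n.1 i < d i)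
    (h : w - n ∈ span ℤ (Set.range fun i => ((Pi.single i (d i) : ι → ℤ), (-1 : ℤ)))) :
    w = n := by
  obtain ⟨c, hc⟩ := (mem_span_single_neg_one_iff d _).1 h
  have hc0 : c = 0 := by
    funext j
    have hdiff : w.1 j - n.1 j = c j * d j := congrFun (congrArg Prod.fst hc) j
    have hsmall : |c j * d j| < d j := by
      rw [← hdiff]
      exact abs_sub_lt_of_nonneg_of_lt (hw j).1 (hw j).2 (hn j).1 (hn j).2
    have hd : d j ≠ 0 := by linarith [(hw j).1, (hw j).2]
    simpa [hd] using Int.eq_zero_of_abs_lt_dvd (dvd_mul_left _ _) hsmall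
  rw [← sub_eq_zero, hc, hc0]
  ext <;> simp

end

/-- In the abelian group generated by `A 1, ..., A r, F` with relations
`d i • A i = F` (`d i` positive), every element `D` has a unique representation
`D = ∑ a i • A i + f • F` with `f ∈ ℤ` and `0 ≤ a i < d i` for each `i`. -/
theorem unique_normal_form (r : ℕ) (d : Fin r → ℕ) (hd : ∀ i, 0 < d i)
    (D : RelMod r d) :
    ∃! v : (Fin r → ℤ) × ℤ,
      (∀ i, 0 ≤ v.1 i ∧ v.1 i < (d i : ℤ))
      ∧ (Submodule.Quotient.mk v : RelMod r d) = D := by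
  obtain ⟨v, rfl⟩ := Submodule.Quotient.mk_surjective _ D
  have hnf := normalForm_fst_nonneg_and_lt (fun i => Int.natCast_pos.2 (hd i)) v
  refine ⟨normalForm (fun i => d i) v,
    ⟨hnf, (Submodule.Quotient.eq _).2 (normalForm_sub_mem_span _ v)⟩, ?_⟩
  rintro w ⟨hw, hwv⟩
  refine eq_of_sub_mem_span_single_neg_one hw hnf ?_
  simpa using sub_mem ((Submodule.Quotient.eq _).1 hwv) (normalForm_sub_mem_span _ v)
end

section
/- Let S⁺ and S⁻ denote cyclic surface quotient singularities of types (1/d)(1,q) and (1/d)(1,-q) respectively and let R_{S^±}: ℤ/d → ℚ be the Riemann–Roch local correction terms, characterized by R_{S^+}(n) + R_{S^-}(n) = -{n/d}, R_{S^+}(n) + R_{S^-}(n-q) = -{n-q/d} - {n/d} + (d-1)/(2d), and R_{S^+}(n) + R_{S^-}(n+q) = -(d-1)/(2d). Then for all integers n and all m ≥ -1: R_{S^+}(n) + R_{S^-}(n - mq) = -Σ_{j=0}^{m} {(n + (j-m)q)/d} + m·(d-1)/(2d), with the convention that an empty sum is 0. -/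
/-!
Put `F m := R_{S⁺}(n) + R_{S⁻}(n - m q)`. Subtracting the case `m = 0` from the case `m = 1`
(applied at `n - m q`) gives the recursion `F (m + 1) = F m - {(n - (m + 1) q)/d} + (d-1)/(2d)`,
and the case `m = -1` gives `F (-1) = -(d-1)/(2d)`. Unrolling the recursion from `-1` yields the
formula, after reflecting the index of summation.
-/

open Finset

theorem Int.eq_sum_range_of_add_one {G : Type*} [AddCommGroup G] {f g : ℤ → G} {c : G}
    (hf : ∀ m, f (m + 1) = f m - g (m + 1) + c) (k : ℕ) :
    f (k - 1) = f (-1) - ∑ i ∈ Finset.range k, g i + k • c := by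
  induction k with
  | zero => simp
  | succ k ih =>
    have hstep := hf (k - 1)
    simp only [sub_add_cancel] at hstep
    rw [Nat.cast_succ, add_sub_cancel_right, hstep, ih, sum_range_succ, succ_nsmul]
    abel

theorem sum_range_fract_reflect (n q : ℤ) (d : ℚ) (k : ℕ) :
    ∑ j ∈ range k, Int.fract (((n : ℚ) + ((j : ℚ) - ((k : ℤ) - 1 : ℤ)) * q) / d)
      = ∑ i ∈ range k, Int.fract (((n - i * q : ℤ) : ℚ) / d) := by
  rw [← sum_range_reflect _ k]
  refine sum_congr rfl fun j hj => ?_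
  have hjk : j ≤ k - 1 := Nat.le_sub_one_of_lt (mem_range.mp hj)
  push_cast [Nat.cast_sub hjk, Nat.cast_sub (Nat.one_le_of_lt (mem_range.mp hj))]
  ring_nf

theorem local_RR_correction_general (d : ℕ) (q : ℤ)
    (Rp Rm : ZMod d → ℚ)
    (hbase0 : ∀ n : ℤ, Rp (n : ZMod d) + Rm (n : ZMod d)
        = -Int.fract ((n : ℚ) / (d : ℚ)))
    (hbase1 : ∀ n : ℤ, Rp (n : ZMod d) + Rm ((n - q : ℤ) : ZMod d)
        = -Int.fract (((n - q : ℤ) : ℚ) / (d : ℚ)) - Int.fract ((n : ℚ) / (d : ℚ))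
          + ((d : ℚ) - 1) / (2 * d))
    (hbaseneg : ∀ n : ℤ, Rp (n : ZMod d) + Rm ((n + q : ℤ) : ZMod d)
        = -(((d : ℚ) - 1) / (2 * d))) :
    ∀ (n m : ℤ), -1 ≤ m →
      Rp (n : ZMod d) + Rm ((n - m * q : ℤ) : ZMod d)
        = -(∑ j ∈ Finset.range (m + 1).toNat,
              Int.fract (((n : ℚ) + ((j : ℚ) - (m : ℚ)) * (q : ℚ)) / (d : ℚ)))
          + (m : ℚ) * ((d : ℚ) - 1) / (2 * d) := by
  intro n m hm
  obtain ⟨k, rfl⟩ : ∃ k : ℕ, m = k - 1 := ⟨(m + 1).toNat, by omega⟩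
  have hstep : ∀ m : ℤ, Rp n + Rm ((n - (m + 1) * q : ℤ) : ZMod d)
      = Rp n + Rm ((n - m * q : ℤ) : ZMod d) - Int.fract (((n - (m + 1) * q : ℤ) : ℚ) / d)
        + ((d : ℚ) - 1) / (2 * d) := by
    intro m
    have h0 := hbase0 (n - m * q)
    have h1 := hbase1 (n - m * q)
    have hn : n - (m + 1) * q = n - m * q - q := by ring
    rw [hn]
    linarith
  have hinit : Rp n + Rm ((n - -1 * q : ℤ) : ZMod d) = -(((d : ℚ) - 1) / (2 * d)) := by
    rw [show n - -1 * q = n + q by ring, hbaseneg]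
  have hk : ((k : ℤ) - 1 + 1).toNat = k := by omega
  have hunrolled := Int.eq_sum_range_of_add_one
    (f := fun m : ℤ => Rp n + Rm ((n - m * q : ℤ) : ZMod d))
    (g := fun i : ℤ => Int.fract (((n - i * q : ℤ) : ℚ) / d)) hstep k
  rw [hunrolled, hinit, hk, sum_range_fract_reflect, nsmul_eq_mul]
  push_cast
  ring

/-- Let `S⁺`, `S⁻` be cyclic quotient surface singularities of types `(1/d)(1,q)` and
`(1/d)(1,-q)` and `R_{S⁺}, R_{S⁻} : ℤ/d → ℚ` the Riemann–Roch local correction terms,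
characterized by the three base identities (cases `m = 0, 1, -1`).  Then for all
integers `n` and all `m ≥ -1`:
`R_{S⁺}(n) + R_{S⁻}(n - m q) = -∑_{j=0}^m {(n + (j-m) q)/d} + m (d-1)/(2d)`,
with the convention that an empty sum is `0`. -/
theorem local_RR_correction (d : ℕ) (hd : 0 < d) (q : ℤ)
    (Rp Rm : ZMod d → ℚ)
    (hbase0 : ∀ n : ℤ, Rp (n : ZMod d) + Rm (n : ZMod d)
        = -Int.fract ((n : ℚ) / (d : ℚ)))
    (hbase1 : ∀ n : ℤ, Rp (n : ZMod d) + Rm ((n - q : ℤ) : ZMod d)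
        = -Int.fract (((n - q : ℤ) : ℚ) / (d : ℚ)) - Int.fract ((n : ℚ) / (d : ℚ))
          + ((d : ℚ) - 1) / (2 * d))
    (hbaseneg : ∀ n : ℤ, Rp (n : ZMod d) + Rm ((n + q : ℤ) : ZMod d)
        = -(((d : ℚ) - 1) / (2 * d))) :
    ∀ (n m : ℤ), -1 ≤ m →
      Rp (n : ZMod d) + Rm ((n - m * q : ℤ) : ZMod d)
        = -(∑ j ∈ Finset.range (m + 1).toNat,
              Int.fract (((n : ℚ) + ((j : ℚ) - (m : ℚ)) * (q : ℚ)) / (d : ℚ)))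
          + (m : ℚ) * ((d : ℚ) - 1) / (2 * d) :=
  local_RR_correction_general d q Rp Rm hbase0 hbase1 hbaseneg
end
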